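/- arXiv:1012.6022 — 5 statements merged into one kernel-verified Lean document; each statement's English description precedes it below -/
import Mathlib

section
/- Let D = {(x,y) ∈ ℝ² : x > 0 and y > 0} be the open positive quadrant and let f : ℝ⁺ → ℝ be a nonconstant function such that the composition f ∘ s_D is convex on D, where s_D(z) = dist(z, ∂D) = min(x,y) for z = (x,y) ∈ D. Then f is decreasing and convex on ℝ⁺. -/
/-- For the open quadrant `D = (0,∞)² ⊆ ℝ²` with `s_D (x,y) = min x y`,
if `f : ℝ⁺ → ℝ` is nonconstant and `f ∘ s_D` is convex on `D`,
then `f` is decreasing and convex on `(0,∞)`. -/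
theorem stmt0 (f : ℝ → ℝ)
    (hnc : ∃ s t : ℝ, 0 < s ∧ 0 < t ∧ f s ≠ f t)
    (hconv : ConvexOn ℝ {p : ℝ × ℝ | 0 < p.1 ∧ 0 < p.2}
      (fun p : ℝ × ℝ => f (min p.1 p.2))) :
    (∀ p t : ℝ, 0 < p → p ≤ t → f t ≤ f p) ∧ ConvexOn ℝ (Set.Ioi (0 : ℝ)) f := by
  constructor
  · intro p t hp hpt
    have hT : p ≤ 2 * t - p := by linarith
    have hTpos : 0 < 2 * t - p := by linarith
    have h := hconv.2 (show ((p, 2 * t - p) : ℝ × ℝ) ∈ _ from ⟨hp, hTpos⟩)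
      (show ((2 * t - p, p) : ℝ × ℝ) ∈ _ from ⟨hTpos, hp⟩)
      (by norm_num : (0:ℝ) ≤ 1/2) (by norm_num : (0:ℝ) ≤ 1/2) (by norm_num : (1:ℝ)/2 + 1/2 = 1)
    simp only [Prod.smul_mk, Prod.mk_add_mk, smul_eq_mul] at h
    have h1 : min ((1:ℝ)/2 * p + 1/2 * (2*t-p)) ((1:ℝ)/2 * (2*t-p) + 1/2 * p) = t := by
      rw [min_eq_left (by linarith)]; ring
    have h2 : min p (2*t-p) = p := min_eq_left hT
    have h3 : min (2*t-p) p = p := min_eq_right hT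
    rw [h1, h2, h3] at h
    linarith
  · constructor
    · intro x hx y hy a b ha hb hab
      have : 0 < a * x + b * y := by
        rcases ha.lt_or_eq with h | h
        · have : 0 < a * x := mul_pos h hx
          nlinarith [mul_nonneg hb hy.le]
        · have hb1 : b = 1 := by linarith
          simp [← h, hb1]; exact hy
      simpa using this
    · intro x hx y hy a b ha hb hab
      have h := hconv.2 (show ((x, x) : ℝ × ℝ) ∈ _ from ⟨hx, hx⟩)
        (show ((y, y) : ℝ × ℝ) ∈ _ from ⟨hy, hy⟩) ha hb hab
      simpa using h
end

section
/- Let D = {z ∈ ℂ : |z − 1| < 2} ∪ {z ∈ ℂ : |z + 1| < 2} ⊂ ℂ. Then the set {z ∈ D : the closed disc with center z and radius √3 · 1 is contained in D, in the sense that z + λ·√3 ∈ D for all |λ| ≤ 1} is not connected. -/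
/-- For `D = {|z-1| < 2} ∪ {|z+1| < 2} ⊆ ℂ`, the set of `z ∈ D` such
that the closed disc of radius `√3` centered at `z` is contained in `D` is not
connected. -/
theorem stmt5 :
    ¬ IsConnected {z : ℂ |
        z ∈ ({w : ℂ | ‖w - 1‖ < 2} ∪ {w : ℂ | ‖w + 1‖ < 2}) ∧
        ∀ lam : ℂ, ‖lam‖ ≤ 1 →
          z + lam * (Real.sqrt 3 : ℝ) ∈
            ({w : ℂ | ‖w - 1‖ < 2} ∪ {w : ℂ | ‖w + 1‖ < 2})} := by
  set S := {z : ℂ |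
        z ∈ ({w : ℂ | ‖w - 1‖ < 2} ∪ {w : ℂ | ‖w + 1‖ < 2}) ∧
        ∀ lam : ℂ, ‖lam‖ ≤ 1 →
          z + lam * (Real.sqrt 3 : ℝ) ∈
            ({w : ℂ | ‖w - 1‖ < 2} ∪ {w : ℂ | ‖w + 1‖ < 2})} with hS
  intro hc
  have s3 : Real.sqrt 3 ^ 2 = 3 := Real.sq_sqrt (by norm_num)
  have s3nn : (0:ℝ) ≤ Real.sqrt 3 := Real.sqrt_nonneg 3
  -- 1 ∈ S
  have h1 : (1 : ℂ) ∈ S := by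
    constructor
    · left; simp
    · intro lam hl
      left
      show ‖1 + lam * (Real.sqrt 3 : ℝ) - 1‖ < 2
      have : (1 : ℂ) + lam * (Real.sqrt 3 : ℝ) - 1 = lam * (Real.sqrt 3 : ℝ) := by ring
      rw [this, norm_mul, Complex.norm_real, Real.norm_eq_abs, abs_of_nonneg s3nn]
      have : ‖lam‖ ≤ 1 := hl
      nlinarith [norm_nonneg lam]
  -- -1 ∈ S
  have hm1 : (-1 : ℂ) ∈ S := by
    constructor
    · right; simp
    · intro lam hl
      right
      show ‖-1 + lam * (Real.sqrt 3 : ℝ) + 1‖ < 2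
      have : (-1 : ℂ) + lam * (Real.sqrt 3 : ℝ) + 1 = lam * (Real.sqrt 3 : ℝ) := by ring
      rw [this, norm_mul, Complex.norm_real, Real.norm_eq_abs, abs_of_nonneg s3nn]
      have : ‖lam‖ ≤ 1 := hl
      nlinarith [norm_nonneg lam]
  -- S avoids the imaginary axis
  have hax : ∀ z ∈ S, z.re ≠ 0 := by
    intro z hz hre
    rcases le_or_gt 0 z.im with ht | ht
    · have hmem := hz.2 Complex.I (by simp)
      rcases hmem with h | h <;> simp only [Set.mem_setOf_eq] at h
      · have h2 : ‖z + Complex.I * (Real.sqrt 3 : ℝ) - 1‖ ^ 2 < 4 := by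
          nlinarith [norm_nonneg (z + Complex.I * (Real.sqrt 3 : ℝ) - 1)]
        rw [Complex.sq_norm, Complex.normSq_apply] at h2
        simp [Complex.add_re, Complex.add_im, Complex.mul_re, Complex.mul_im, hre] at h2
        nlinarith
      · have h2 : ‖z + Complex.I * (Real.sqrt 3 : ℝ) + 1‖ ^ 2 < 4 := by
          nlinarith [norm_nonneg (z + Complex.I * (Real.sqrt 3 : ℝ) + 1)]
        rw [Complex.sq_norm, Complex.normSq_apply] at h2
        simp [Complex.add_re, Complex.add_im, Complex.mul_re, Complex.mul_im, hre] at h2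
        nlinarith
    · have hmem := hz.2 (-Complex.I) (by simp)
      rcases hmem with h | h <;> simp only [Set.mem_setOf_eq] at h
      · have h2 : ‖z + -Complex.I * (Real.sqrt 3 : ℝ) - 1‖ ^ 2 < 4 := by
          nlinarith [norm_nonneg (z + -Complex.I * (Real.sqrt 3 : ℝ) - 1)]
        rw [Complex.sq_norm, Complex.normSq_apply] at h2
        simp [Complex.add_re, Complex.add_im, Complex.mul_re, Complex.mul_im, hre] at h2
        nlinarith
      · have h2 : ‖z + -Complex.I * (Real.sqrt 3 : ℝ) + 1‖ ^ 2 < 4 := by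
          nlinarith [norm_nonneg (z + -Complex.I * (Real.sqrt 3 : ℝ) + 1)]
        rw [Complex.sq_norm, Complex.normSq_apply] at h2
        simp [Complex.add_re, Complex.add_im, Complex.mul_re, Complex.mul_im, hre] at h2
        nlinarith
  -- disconnect with two open half-planes
  have hU : IsOpen {z : ℂ | z.re < 0} := isOpen_lt Complex.continuous_re continuous_const
  have hV : IsOpen {z : ℂ | 0 < z.re} := isOpen_lt continuous_const Complex.continuous_re
  have hsub : S ⊆ {z : ℂ | z.re < 0} ∪ {z : ℂ | 0 < z.re} := by
    intro z hz
    rcases lt_trichotomy z.re 0 with h | h | h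
    · exact Or.inl h
    · exact absurd h (hax z hz)
    · exact Or.inr h
  obtain ⟨x, -, hx1, hx2⟩ := hc.isPreconnected {z : ℂ | z.re < 0} {z : ℂ | 0 < z.re}
    hU hV hsub ⟨-1, hm1, by norm_num⟩ ⟨1, h1, by norm_num⟩
  simp only [Set.mem_setOf_eq] at hx1 hx2
  linarith
end

section
/- Let D ⊂ ℂⁿ be an open set such that for every point a ∉ D there is an affine complex hyperplane through a disjoint from D (D is linearly convex). Then the set H_D = {(z,w) ∈ D × ℂⁿ : z + λw ∈ D for all |λ| ≤ 1} ⊂ ℂ²ⁿ is linearly convex: for every (a,b) ∉ H_D there is an affine complex hyperplane in ℂ²ⁿ through (a,b) disjoint from H_D. -/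
/-- If an open set `D ⊆ ℂⁿ` is linearly convex (every point of its
complement lies on an affine complex hyperplane disjoint from `D`), then
`H_D = {(z,w) : z + λw ∈ D for all |λ| ≤ 1} ⊆ ℂ²ⁿ` is linearly convex. -/
theorem stmt8 (n : ℕ) (D : Set (EuclideanSpace ℂ (Fin n))) (hD : IsOpen D)
    (hlc : ∀ a : EuclideanSpace ℂ (Fin n), a ∉ D →
      ∃ L : EuclideanSpace ℂ (Fin n) →ᵃ[ℂ] ℂ, L.linear ≠ 0 ∧ L a = 0 ∧ ∀ z ∈ D, L z ≠ 0) :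
    ∀ p : EuclideanSpace ℂ (Fin n) × EuclideanSpace ℂ (Fin n),
      p ∉ {q : EuclideanSpace ℂ (Fin n) × EuclideanSpace ℂ (Fin n) |
            q.1 ∈ D ∧ ∀ lam : ℂ, ‖lam‖ ≤ 1 → q.1 + lam • q.2 ∈ D} →
      ∃ L : EuclideanSpace ℂ (Fin n) × EuclideanSpace ℂ (Fin n) →ᵃ[ℂ] ℂ,
        L.linear ≠ 0 ∧ L p = 0 ∧
        ∀ q ∈ {q : EuclideanSpace ℂ (Fin n) × EuclideanSpace ℂ (Fin n) |
            q.1 ∈ D ∧ ∀ lam : ℂ, ‖lam‖ ≤ 1 → q.1 + lam • q.2 ∈ D}, L q ≠ 0 := by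
  intro p hp
  obtain ⟨a, b⟩ := p
  have hex : ∃ lam : ℂ, ‖lam‖ ≤ 1 ∧ a + lam • b ∉ D := by
    by_cases ha : a ∈ D
    · simp only [Set.mem_setOf_eq] at hp
      push_neg at hp
      obtain ⟨lam, h1, h2⟩ := hp ha
      exact ⟨lam, h1, h2⟩
    · exact ⟨0, by simp, by simpa using ha⟩
  obtain ⟨lam, hlam, hnot⟩ := hex
  obtain ⟨L0, hL0lin, hL0a, hL0⟩ := hlc _ hnot
  let E := EuclideanSpace ℂ (Fin n)
  let f : (E × E) →ₗ[ℂ] E := LinearMap.fst ℂ E E + lam • LinearMap.snd ℂ E E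
  have hfval : ∀ q : E × E, f q = q.1 + lam • q.2 := fun q => rfl
  refine ⟨L0.comp f.toAffineMap, ?_, ?_, ?_⟩
  · intro h
    apply hL0lin
    ext z
    have hz : (L0.comp f.toAffineMap).linear (z, 0) = L0.linear z := by
      simp [AffineMap.comp, hfval, LinearMap.toAffineMap]
    rw [h] at hz
    simpa using hz.symm
  · show L0 (f (a, b)) = 0
    rw [hfval]
    exact hL0a
  · rintro ⟨z, w⟩ ⟨hz, hq⟩
    show L0 (f (z, w)) ≠ 0
    rw [hfval]
    exact hL0 _ (hq lam hlam)
end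

section
/- The domain D = {z ∈ ℂ³ : |z| < √2 · max(|z₁|,|z₂|,|z₃|)} is not linearly convex: no complex hyperplane through 0 misses D, i.e. for every complex hyperplane P = {z₃ = α₁z₁ + α₂z₂} with |α₁| ≤ 1 and |α₂| ≤ 1 (after permutation of coordinates), P ∩ D ≠ ∅. -/
lemma key12 (σ : Equiv.Perm (Fin 3)) (a b c : ℂ)
    (h : ‖a‖^2 + ‖b‖^2 + ‖c‖^2 < 2 * (max ‖a‖ (max ‖b‖ ‖c‖))^2) :
    ∃ z ∈ {z : EuclideanSpace ℂ (Fin 3) |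
        ‖z‖ < Real.sqrt 2 * max ‖z 0‖ (max ‖z 1‖ ‖z 2‖)},
      z (σ 0) = a ∧ z (σ 1) = b ∧ z (σ 2) = c := by
  classical
  set z : EuclideanSpace ℂ (Fin 3) :=
    WithLp.toLp 2 (fun i => if i = σ 0 then a else if i = σ 1 then b else c) with hz
  have h01 : σ 1 ≠ σ 0 := σ.injective.ne (by decide)
  have h20 : σ 2 ≠ σ 0 := σ.injective.ne (by decide)
  have h21 : σ 2 ≠ σ 1 := σ.injective.ne (by decide)
  have za : z (σ 0) = a := by simp [hz]
  have zb : z (σ 1) = b := by simp [hz, h01]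
  have zc : z (σ 2) = c := by simp [hz, h20, h21]
  refine ⟨z, ?_, za, zb, zc⟩
  have hmax : max ‖a‖ (max ‖b‖ ‖c‖) ≤ max ‖z 0‖ (max ‖z 1‖ ‖z 2‖) := by
    have hle : ∀ i : Fin 3, ‖z i‖ ≤ max ‖z 0‖ (max ‖z 1‖ ‖z 2‖) := by
      intro i; fin_cases i <;> simp [le_max_iff, le_refl]
    refine max_le ?_ (max_le ?_ ?_)
    · rw [← za]; exact hle _
    · rw [← zb]; exact hle _
    · rw [← zc]; exact hle _
  have hsum : ∑ i : Fin 3, ‖z i‖^2 = ‖a‖^2 + ‖b‖^2 + ‖c‖^2 := by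
    rw [← Equiv.sum_comp σ (fun i => ‖z i‖^2), Fin.sum_univ_three, za, zb, zc]
  have hM0 : (0:ℝ) ≤ max ‖a‖ (max ‖b‖ ‖c‖) := le_trans (norm_nonneg a) (le_max_left _ _)
  have hnorm : ‖z‖ < Real.sqrt 2 * max ‖a‖ (max ‖b‖ ‖c‖) := by
    rw [EuclideanSpace.norm_eq]
    have hr : Real.sqrt 2 * max ‖a‖ (max ‖b‖ ‖c‖)
        = Real.sqrt (2 * (max ‖a‖ (max ‖b‖ ‖c‖))^2) := by
      rw [Real.sqrt_mul (by norm_num : (0:ℝ) ≤ 2), Real.sqrt_sq hM0]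
    rw [hr]
    refine Real.sqrt_lt_sqrt (by positivity) ?_
    calc ∑ i : Fin 3, ‖z i‖^2 = ‖a‖^2 + ‖b‖^2 + ‖c‖^2 := hsum
      _ < 2 * (max ‖a‖ (max ‖b‖ ‖c‖))^2 := h
  exact lt_of_lt_of_le hnorm (by
    have : (0:ℝ) ≤ Real.sqrt 2 := Real.sqrt_nonneg 2
    exact mul_le_mul_of_nonneg_left hmax this)

/-- `D = {z ∈ ℂ³ : ‖z‖ < √2·max(|z₁|,|z₂|,|z₃|)}` is not linearly
convex: every complex hyperplane which, after a permutation of the coordinates, is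
of the form `{z_{σ3} = α₁ z_{σ1} + α₂ z_{σ2}}` with `|α₁| ≤ 1`, `|α₂| ≤ 1`,
meets `D`. -/
theorem stmt12 (σ : Equiv.Perm (Fin 3)) (α₁ α₂ : ℂ) (h1 : ‖α₁‖ ≤ 1) (h2 : ‖α₂‖ ≤ 1) :
    ∃ z ∈ {z : EuclideanSpace ℂ (Fin 3) |
        ‖z‖ < Real.sqrt 2 * max ‖z 0‖ (max ‖z 1‖ ‖z 2‖)},
      z (σ 2) = α₁ * z (σ 0) + α₂ * z (σ 1) := by
  rcases lt_or_eq_of_le h1 with ha | ha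
  · -- |α₁| < 1 : take (1, 0, α₁)
    obtain ⟨z, hz, za, zb, zc⟩ := key12 σ 1 0 α₁ (by
      have h0 : (0:ℝ) ≤ ‖α₁‖ := norm_nonneg _
      have hm : max ‖(1:ℂ)‖ (max ‖(0:ℂ)‖ ‖α₁‖) = 1 := by
        rw [norm_one, norm_zero, max_eq_right h0, max_eq_left ha.le]
      rw [hm]; simp only [norm_one, norm_zero]; nlinarith)
    exact ⟨z, hz, by rw [za, zb, zc]; ring⟩
  · rcases lt_or_eq_of_le h2 with hb | hb
    · -- |α₂| < 1 : take (0, 1, α₂)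
      obtain ⟨z, hz, za, zb, zc⟩ := key12 σ 0 1 α₂ (by
        have hm : max ‖(0:ℂ)‖ (max ‖(1:ℂ)‖ ‖α₂‖) = 1 := by
          rw [norm_one, norm_zero, max_eq_left hb.le]
          exact max_eq_right zero_le_one
        rw [hm]; simp only [norm_one, norm_zero]; nlinarith [norm_nonneg α₂])
      exact ⟨z, hz, by rw [za, zb, zc]; ring⟩
    · -- |α₁| = |α₂| = 1 : take (conj α₁, conj α₂, 2)
      obtain ⟨z, hz, za, zb, zc⟩ := key12 σ (starRingEnd ℂ α₁) (starRingEnd ℂ α₂) 2 (by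
        have n1 : ‖starRingEnd ℂ α₁‖ = 1 := by rw [RCLike.norm_conj, ← ha]
        have n2 : ‖starRingEnd ℂ α₂‖ = 1 := by rw [RCLike.norm_conj, ← hb]
        have n3 : ‖(2:ℂ)‖ = 2 := by norm_num
        rw [n1, n2, n3]
        norm_num)
      refine ⟨z, hz, ?_⟩
      rw [za, zb, zc, Complex.mul_conj, Complex.mul_conj, Complex.normSq_eq_norm_sq,
        Complex.normSq_eq_norm_sq]
      rw [ha, hb]
      norm_num
end

section
/- Let ρ(z,w) = Re z + (Im z)² − (Re w)² + c(Im w)² on ℂ² with c < 1. Fix small δ > 0, and for s with 3(1−c)^{−1/2} δ^{3/2} ≤ s ≤ δ, θ ∈ ℝ, let z_δ = (−δ, 0) and X = (δ, s e^{iθ}). Define r(θ) = sup{r > 0 : ρ(z_δ + λX) < 0 for all |λ| < r}. Then (1/2π) ∫₀^{2π} dθ / r(θ) < 1. -/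
open Real

set_option maxHeartbeats 1000000 in
/-- Core pointwise estimate: `1/sSup S(θ) ≤ 1 - (s²/δ)(1 - (1+c⁺)sin²θ - 12δ)`. -/
lemma stmt17_core (c δ s θ : ℝ) (hc : c < 1) (hδ : 0 < δ) (hδ48 : δ < 1/48)
    (hs0 : 0 < s) (hsδ : s ≤ δ) :
    1 / sSup {r : ℝ | 0 < r ∧ ∀ lam : ℂ, ‖lam‖ < r →
              ((-(δ : ℂ) + lam * (δ : ℂ)).re
                + (-(δ : ℂ) + lam * (δ : ℂ)).im ^ 2
                - (lam * ((s : ℂ) * Complex.exp (θ * Complex.I))).re ^ 2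
                + c * (lam * ((s : ℂ) * Complex.exp (θ * Complex.I))).im ^ 2) < 0}
      ≤ 1 - s^2/δ * (1 - (1 + max c (-1)) * Real.sin θ ^ 2 - 12*δ) := by
  set a : ℝ := 1 + max c (-1) with ha_def
  clear_value a
  have ha0 : 0 ≤ a := by have := le_max_right c (-1); rw [ha_def]; linarith
  have ha2 : a < 2 := by
    have h1 := max_lt hc (by norm_num : (-1:ℝ) < 1); rw [ha_def]; linarith
  set v : ℝ := s^2/δ with hv_def
  clear_value v
  have hv0 : 0 < v := by rw [hv_def]; exact div_pos (pow_pos hs0 2) hδ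
  have hδv : δ * v = s^2 := by rw [hv_def]; field_simp
  have hs2δ : s^2 ≤ δ^2 := by nlinarith only [hsδ, hs0]
  have hvδ : v ≤ δ := by rw [hv_def, div_le_iff₀ hδ]; nlinarith only [hs2δ, hδ]
  set S : ℝ := Real.sin θ with hS_def
  set C : ℝ := Real.cos θ with hC_def
  clear_value S C
  have hS2 : S^2 + C^2 = 1 := by rw [hS_def, hC_def]; exact Real.sin_sq_add_cos_sq θ
  have haS0 : 0 ≤ a * S^2 := mul_nonneg ha0 (sq_nonneg S)
  have haSC : a*S^2 + a*C^2 = a := by linear_combination a*hS2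
  have haS2 : a * S^2 ≤ 2 := by
    linarith only [haSC, mul_nonneg ha0 (sq_nonneg C), ha2]
  set K : ℝ := 1 - a * S^2 - 4*δ with hK_def
  clear_value K
  have hK1 : K ≤ 1 := by rw [hK_def]; linarith only [haS0, hδ]
  have hK2 : -2 ≤ K := by rw [hK_def]; linarith only [haS2, hδ48]
  have hvK1 : v * K ≤ δ := by
    linarith only [mul_nonneg hv0.le (by linarith only [hK1] : (0:ℝ) ≤ 1 - K), hvδ]
  have hvK2 : -(2*δ) ≤ v * K := by
    linarith only [mul_nonneg hv0.le (by linarith only [hK2] : (0:ℝ) ≤ K + 2), hvδ]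
  set r₀ : ℝ := 1 + v * K with hr₀_def
  clear_value r₀
  have hr₀pos : 0 < r₀ := by rw [hr₀_def]; linarith only [hvK2, hδ48]
  have hr₀le : r₀ ≤ 1 + δ := by rw [hr₀_def]; linarith only [hvK1]
  have hq48 : (0:ℝ) ≤ (1/48 - δ)*δ := mul_nonneg (by linarith only [hδ48]) hδ.le
  have hq48' : (0:ℝ) ≤ (1/48 - δ)*(δ*δ) := mul_nonneg (by linarith only [hδ48]) (by positivity)
  have hmem : r₀ ∈ {r : ℝ | 0 < r ∧ ∀ lam : ℂ, ‖lam‖ < r →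
              ((-(δ : ℂ) + lam * (δ : ℂ)).re
                + (-(δ : ℂ) + lam * (δ : ℂ)).im ^ 2
                - (lam * ((s : ℂ) * Complex.exp (θ * Complex.I))).re ^ 2
                + c * (lam * ((s : ℂ) * Complex.exp (θ * Complex.I))).im ^ 2) < 0} := by
    refine ⟨hr₀pos, fun lam hlam => ?_⟩
    simp only [Complex.add_re, Complex.add_im, Complex.mul_re, Complex.mul_im, Complex.neg_re,
      Complex.neg_im, Complex.ofReal_re, Complex.ofReal_im, Complex.exp_ofReal_mul_I_re,
      Complex.exp_ofReal_mul_I_im, ← hS_def, ← hC_def]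
    set x : ℝ := lam.re with hx_def
    set y : ℝ := lam.im with hy_def
    set r : ℝ := ‖lam‖ with hr_def
    clear_value x y r
    have hr0 : 0 ≤ r := by rw [hr_def]; exact norm_nonneg lam
    have hrlt : r < r₀ := hlam
    have hrle : r < 1 + δ := lt_of_lt_of_le hrlt hr₀le
    have hxy2 : x^2 + y^2 = r^2 := by
      rw [hx_def, hy_def, hr_def, Complex.sq_norm, Complex.normSq_apply]; ring
    have hax : |x| ≤ r := by
      rw [hx_def, hr_def]; exact Complex.abs_re_le_norm lam
    have hxr : x ≤ r := le_trans (le_abs_self x) hax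
    have hrxnn : 0 ≤ r + x := by have := neg_le_abs x; linarith only [this, hax]
    have hx2 : x^2 ≤ r^2 := by nlinarith only [hxy2, sq_nonneg y]
    -- absorption of the y² terms: δx + (δ² + δ/4 + a s²) y² ≤ δ r
    have has2 : a*s^2 ≤ 2*δ^2 := by
      linarith only [mul_nonneg (sub_nonneg.2 ha2.le) (sq_nonneg s), hs2δ]
    have hαle : δ^2 + δ/4 + a*s^2 ≤ δ/4 + 3*δ^2 := by linarith only [has2]
    have hrx2 : r + x ≤ 2*(1+δ) := by linarith only [hxr, hrle]
    have hcoef' : (δ^2 + δ/4 + a*s^2) * (r + x) ≤ δ := by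
      have h := mul_le_mul hαle hrx2 hrxnn (by positivity : (0:ℝ) ≤ δ/4 + 3*δ^2)
      nlinarith only [h, hq48, hq48', hδ]
    have hy2eq : (δ^2 + δ/4 + a*s^2)*y^2 = (δ^2 + δ/4 + a*s^2)*((r-x)*(r+x)) := by
      have h : y^2 = (r-x)*(r+x) := by nlinarith only [hxy2]
      rw [h]
    have h1 : δ*x + (δ^2 + δ/4 + a*s^2)*y^2 ≤ δ*r := by
      have h := mul_le_mul_of_nonneg_left hcoef' (by linarith only [hxr] : (0:ℝ) ≤ r - x)
      nlinarith only [h, hy2eq]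
    -- cross term AM-GM
    have hSC2 : (S*C)^2 ≤ 1/4 := by nlinarith only [sq_nonneg (S^2 - C^2), hS2]
    have e1 : x^2*(S*C)^2 ≤ r^2*(1/4) :=
      mul_le_mul hx2 hSC2 (sq_nonneg _) (sq_nonneg r)
    have e2 : a^2*(s^2)^2 ≤ 4*(δ^2*s^2) := by
      have q1 : (0:ℝ) ≤ ((2-a)*(2+a))*((s^2)^2) :=
        mul_nonneg (mul_nonneg (by linarith only [ha2]) (by linarith only [ha0])) (sq_nonneg _)
      have q2 : (0:ℝ) ≤ (δ^2 - s^2)*s^2 := mul_nonneg (by linarith only [hs2δ]) (sq_nonneg s)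
      nlinarith only [q1, q2]
    have hB : (a*s^2*(x*S*C))^2 ≤ δ^2*s^2*r^2 := by
      have h := mul_le_mul e2 e1 (by positivity) (by positivity)
      nlinarith only [h]
    have hdiv : (4/δ)*(a*s^2*(x*S*C))^2 ≤ 4*δ*s^2*r^2 := by
      rw [div_mul_eq_mul_div, div_le_iff₀ hδ]; nlinarith only [hB]
    have hamgm : 2*(y*(a*s^2*(x*S*C))) ≤ δ/4*y^2 + (4/δ)*(a*s^2*(x*S*C))^2 := by
      have h := sq_nonneg (δ*y - 4*(a*s^2*(x*S*C)))
      have e : δ/4*y^2 + (4/δ)*(a*s^2*(x*S*C))^2 - 2*(y*(a*s^2*(x*S*C)))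
          = (δ*y - 4*(a*s^2*(x*S*C)))^2/(4*δ) := by field_simp; ring
      linarith only [e, div_nonneg h (by positivity : (0:ℝ) ≤ 4*δ)]
    have hcross : a*s^2*(2*(x*y*S*C)) ≤ δ/4*y^2 + 4*δ*s^2*r^2 := by
      nlinarith only [hamgm, hdiv]
    -- sum of squares identity and 1 + c ≤ a
    have hwsum : s^2*((x*C - y*S)^2 + (x*S + y*C)^2) = s^2*r^2 := by
      have h : (x*C - y*S)^2 + (x*S + y*C)^2 = r^2 := by
        linear_combination (S^2 + C^2)*hxy2 + r^2*hS2
      rw [h]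
    have hc_le : 1 + c ≤ a := by have := le_max_left c (-1); rw [ha_def]; linarith
    have hA1 : -(x*(s*C) - y*(s*S))^2 + c*(x*(s*S) + y*(s*C))^2
        ≤ -(s^2*r^2) + a*(s^2*(x*S + y*C)^2) := by
      have hp := mul_nonneg (sq_nonneg s)
        (mul_nonneg (by linarith only [hc_le] : (0:ℝ) ≤ a - 1 - c) (sq_nonneg (x*S + y*C)))
      nlinarith only [hp, hwsum]
    have hxS2 : (a*s^2*S^2)*x^2 ≤ (a*s^2*S^2)*r^2 :=
      mul_le_mul_of_nonneg_left hx2 (by positivity)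
    have hyC : (a*s^2)*(y^2*C^2) ≤ (a*s^2)*y^2 := by
      have hy : y^2*C^2 ≤ y^2 := by nlinarith only [hS2, sq_nonneg (y*S), sq_nonneg y]
      exact mul_le_mul_of_nonneg_left hy (by positivity)
    have hA2 : a*(s^2*(x*S + y*C)^2)
        ≤ (a*s^2*S^2)*r^2 + (δ/4*y^2 + 4*δ*s^2*r^2) + (a*s^2)*y^2 := by
      nlinarith only [hcross, hxS2, hyC]
    have hKval : s^2*r^2*K = s^2*r^2 - a*s^2*S^2*r^2 - 4*δ*(s^2*r^2) := by
      rw [hK_def]; ring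
    have hmain : -δ + x*δ + (y*δ)^2 - (x*(s*C) - y*(s*S))^2 + c*(x*(s*S) + y*(s*C))^2
        ≤ δ*r - δ - s^2*r^2*K := by
      nlinarith only [h1, hA1, hA2, hKval]
    -- final: δ r − δ − s² r² K < 0 for r < r₀
    have h1' : 0 < 1 + v*K - r := by rw [hr₀_def] at hrlt; linarith only [hrlt]
    have hr1nn : (0:ℝ) ≤ r + 1 := by linarith only [hr0]
    have h2' : 0 < 1 - (v*K)*(r+1) := by
      rcases le_or_gt 0 (v*K) with h | h
      · have p1 := mul_le_mul hvK1 (by linarith only [hrle] : r + 1 ≤ 2 + δ) hr1nn hδ.le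
        nlinarith only [p1, hq48, hδ]
      · nlinarith only [mul_nonneg (by linarith only [h] : (0:ℝ) ≤ -(v*K)) hr1nn]
    have hq : 0 < 1 - r + (v*K)*r^2 := by
      nlinarith only [mul_pos h1' h2', mul_nonneg (sq_nonneg (v*K)) hr1nn]
    have hsrK : s^2*r^2*K = δ*((v*K)*r^2) := by linear_combination (-(r^2*K))*hδv
    have hfin : δ*r - δ - s^2*r^2*K < 0 := by
      nlinarith only [mul_pos hδ hq, hsrK]
    nlinarith only [hmain, hfin]
  by_cases hb : BddAbove {r : ℝ | 0 < r ∧ ∀ lam : ℂ, ‖lam‖ < r →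
              ((-(δ : ℂ) + lam * (δ : ℂ)).re
                + (-(δ : ℂ) + lam * (δ : ℂ)).im ^ 2
                - (lam * ((s : ℂ) * Complex.exp (θ * Complex.I))).re ^ 2
                + c * (lam * ((s : ℂ) * Complex.exp (θ * Complex.I))).im ^ 2) < 0}
  · have hle := le_csSup hb hmem
    have h1r : 1 / sSup {r : ℝ | 0 < r ∧ ∀ lam : ℂ, ‖lam‖ < r →
              ((-(δ : ℂ) + lam * (δ : ℂ)).re
                + (-(δ : ℂ) + lam * (δ : ℂ)).im ^ 2
                - (lam * ((s : ℂ) * Complex.exp (θ * Complex.I))).re ^ 2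
                + c * (lam * ((s : ℂ) * Complex.exp (θ * Complex.I))).im ^ 2) < 0}
        ≤ 1 / r₀ := one_div_le_one_div_of_le hr₀pos hle
    refine le_trans h1r ?_
    rw [div_le_iff₀ hr₀pos, hr₀_def]
    have hKe : (1:ℝ) - a*S^2 - 12*δ = K - 8*δ := by rw [hK_def]; ring
    rw [hKe]
    have hK4 : K^2 ≤ 4 := by nlinarith only [hK1, hK2]
    have p3 : v^2*K^2 ≤ 4*(v*δ) := by
      nlinarith only [mul_nonneg (mul_nonneg hv0.le hv0.le)
          (by linarith only [hK4] : (0:ℝ) ≤ 4 - K^2),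
        mul_nonneg hv0.le (by linarith only [hvδ] : (0:ℝ) ≤ δ - v)]
    have p1 : 0 ≤ δ*(v^2*(K+2)) :=
      mul_nonneg hδ.le (mul_nonneg (sq_nonneg v) (by linarith only [hK2]))
    have p2 : 0 ≤ (δ*v)*(δ - v) :=
      mul_nonneg (mul_nonneg hδ.le hv0.le) (by linarith only [hvδ])
    have p4 : 0 ≤ (1/48 - δ)*(δ*v) :=
      mul_nonneg (by linarith only [hδ48]) (mul_nonneg hδ.le hv0.le)
    nlinarith only [p1, p2, p3, p4, mul_pos hδ hv0]
  · rw [Real.sSup_of_not_bddAbove hb, div_zero]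
    have h : v*(1 - a*S^2 - 12*δ) ≤ v := by
      nlinarith only [mul_nonneg hv0.le haS0, mul_nonneg hv0.le hδ.le]
    linarith only [h, hvδ, hδ48]

set_option maxHeartbeats 1000000 in
/-- Lemma 5 of the paper: With
`ρ(z,w) = Re z + (Im z)² − (Re w)² + c(Im w)²`, `c < 1`, for all sufficiently small
`δ > 0` and all `s` with `3(1−c)^{−1/2}δ^{3/2} ≤ s ≤ δ`, setting `z_δ = (−δ,0)`,
`X_θ = (δ, s e^{iθ})` and `r(θ)` the largest `r` with `ρ(z_δ + λX_θ) < 0` for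
`|λ| < r`, one has `(1/2π)∫₀^{2π} dθ / r(θ) < 1`. -/
theorem stmt17 (c : ℝ) (hc : c < 1) :
    ∃ δ₀ > (0 : ℝ), ∀ δ : ℝ, 0 < δ → δ < δ₀ →
      ∀ s : ℝ, 3 / Real.sqrt (1 - c) * δ ^ ((3 : ℝ) / 2) ≤ s → s ≤ δ →
        (1 / (2 * Real.pi)) *
          (∫ θ in (0 : ℝ)..(2 * Real.pi),
            1 / sSup {r : ℝ | 0 < r ∧ ∀ lam : ℂ, ‖lam‖ < r →
              ((-(δ : ℂ) + lam * (δ : ℂ)).re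
                + (-(δ : ℂ) + lam * (δ : ℂ)).im ^ 2
                - (lam * ((s : ℂ) * Complex.exp (θ * Complex.I))).re ^ 2
                + c * (lam * ((s : ℂ) * Complex.exp (θ * Complex.I))).im ^ 2) < 0}) < 1 := by
  have hmax : max c (-1) < 1 := max_lt hc (by norm_num)
  have hmr : (-1:ℝ) ≤ max c (-1) := le_max_right c (-1)
  refine ⟨(1 - max c (-1))/96, div_pos (by linarith) (by norm_num), ?_⟩
  intro δ hδ hδ₀ s hs1 hs2
  have hδ48 : δ < 1/48 := by linarith
  have h1c : 0 < Real.sqrt (1 - c) := Real.sqrt_pos.2 (by linarith)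
  have hs0 : 0 < s :=
    lt_of_lt_of_le (mul_pos (div_pos (by norm_num) h1c) (Real.rpow_pos_of_pos hδ _)) hs1
  have hv0 : 0 < s^2/δ := div_pos (pow_pos hs0 2) hδ
  have hπ := Real.pi_pos
  by_cases hInt : IntervalIntegrable (fun θ : ℝ =>
      1 / sSup {r : ℝ | 0 < r ∧ ∀ lam : ℂ, ‖lam‖ < r →
              ((-(δ : ℂ) + lam * (δ : ℂ)).re
                + (-(δ : ℂ) + lam * (δ : ℂ)).im ^ 2
                - (lam * ((s : ℂ) * Complex.exp (θ * Complex.I))).re ^ 2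
                + c * (lam * ((s : ℂ) * Complex.exp (θ * Complex.I))).im ^ 2) < 0})
      MeasureTheory.volume 0 (2*Real.pi)
  · have hcont : Continuous (fun θ : ℝ =>
        1 - s^2/δ * (1 - (1 + max c (-1)) * Real.sin θ ^ 2 - 12*δ)) := by
      fun_prop
    have hIntH : IntervalIntegrable (fun θ : ℝ =>
        1 - s^2/δ * (1 - (1 + max c (-1)) * Real.sin θ ^ 2 - 12*δ))
        MeasureTheory.volume 0 (2*Real.pi) := hcont.intervalIntegrable 0 (2*Real.pi)
    have hmono := intervalIntegral.integral_mono_on (by positivity : (0:ℝ) ≤ 2*Real.pi)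
      hInt hIntH (fun θ _ => stmt17_core c δ s θ hc hδ hδ48 hs0 hs2)
    have hval : (∫ θ in (0:ℝ)..(2*Real.pi),
        (1 - s^2/δ * (1 - (1 + max c (-1)) * Real.sin θ ^ 2 - 12*δ)))
        = 2*Real.pi - s^2/δ*Real.pi*(2 - (1 + max c (-1)) - 24*δ) := by
      have he : (fun θ : ℝ => 1 - s^2/δ * (1 - (1 + max c (-1)) * Real.sin θ ^ 2 - 12*δ))
          = fun θ : ℝ => (1 - s^2/δ*(1-12*δ)) + (s^2/δ*(1 + max c (-1))) * Real.sin θ^2 := by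
        funext θ; ring
      rw [he, intervalIntegral.integral_add intervalIntegrable_const
        ((Continuous.intervalIntegrable (by fun_prop) _ _)),
        intervalIntegral.integral_const, intervalIntegral.integral_const_mul, integral_sin_sq]
      simp [Real.sin_two_pi, Real.cos_two_pi, smul_eq_mul]
      ring
    have ha24 : 0 < 2 - (1 + max c (-1)) - 24*δ := by linarith
    have hlt : (∫ θ in (0:ℝ)..(2*Real.pi),
        (1 - s^2/δ * (1 - (1 + max c (-1)) * Real.sin θ ^ 2 - 12*δ))) < 2*Real.pi := by
      rw [hval]
      nlinarith only [mul_pos (mul_pos hv0 hπ) ha24]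
    rw [div_mul_eq_mul_div, div_lt_one (by positivity : (0:ℝ) < 2*Real.pi), one_mul]
    exact lt_of_le_of_lt hmono hlt
  · rw [intervalIntegral.integral_undef hInt]
    norm_num
end
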